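/- arXiv:1802.07375 — 5 statements merged into one kernel-verified Lean document; each statement's English description precedes it below -/
import Mathlib

section
/- Let S be a string of length n over an alphabet Σ, let p ≥ 1, let m = ⌊n/p⌋, and for 1 ≤ j ≤ m let u_j = S[(j−1)p+1, jp] denote the j-th consecutive block of length p. If p is a k-period of S, then the number of indices j with 2 ≤ j ≤ m such that u_j ≠ u_{j−1} is at most k. -/
open scoped Classical

namespace KPeriod

variable {α : Type*}

noncomputable def periodMismatches (S : ℕ → α) (n p : ℕ) : Finset ℕ :=
  (Finset.range (n - p)).filter (fun x => S x ≠ S (x + p))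

/-- Indexing is 0-based: block `j` is `S[j p, (j+1) p)`. -/
noncomputable def blockChanges (S : ℕ → α) (n p : ℕ) : Finset ℕ :=
  (Finset.Ico 1 (n / p)).filter (fun j => ∃ x < p, S (j * p + x) ≠ S ((j - 1) * p + x))

/- A change between blocks `i` and `i + 1` at offset `x` is a mismatch at position `i p + x`,
which lies in block `i`; so reading off the block of a mismatch hits every change. -/
theorem blockChanges_subset_image_periodMismatches (S : ℕ → α) (n p : ℕ) :
    blockChanges S n p ⊆ (KPeriod.periodMismatches S n p).image (fun y => y / p + 1) := by
  intro j hj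
  simp only [blockChanges, Finset.mem_filter, Finset.mem_Ico] at hj
  obtain ⟨⟨hj_pos, hj_lt⟩, x, hx, hne⟩ := hj
  obtain ⟨i, rfl⟩ := Nat.exists_eq_add_of_le' hj_pos
  rw [Nat.add_sub_cancel] at hne
  have hp : 0 < p := Nat.pos_of_ne_zero (by rintro rfl; simp at hj_lt)
  have hblocks : (i + 2) * p ≤ n :=
    (Nat.mul_le_mul_right p hj_lt).trans (Nat.div_mul_le_self n p)
  refine Finset.mem_image.2 ⟨i * p + x, ?_, ?_⟩
  · simp only [periodMismatches, Finset.mem_filter, Finset.mem_range]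
    refine ⟨Nat.lt_sub_of_add_lt (by nlinarith), ?_⟩
    rw [show i * p + x + p = (i + 1) * p + x by ring]
    exact Ne.symm hne
  · rw [add_comm (i * p) x, Nat.add_mul_div_right _ _ hp, Nat.div_eq_of_lt hx, zero_add]

end KPeriod

theorem stmt0_general {α : Type*} (n p k : ℕ) (S : ℕ → α)
    (hper : ((Finset.range (n - p)).filter (fun x => S x ≠ S (x + p))).card ≤ k) :
    ((Finset.Ico 1 (n / p)).filter
      (fun j => ∃ x < p, S (j * p + x) ≠ S ((j - 1) * p + x))).card ≤ k :=
  calc (KPeriod.blockChanges S n p).card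
      ≤ ((KPeriod.periodMismatches S n p).image (fun y => y / p + 1)).card :=
        Finset.card_le_card (KPeriod.blockChanges_subset_image_periodMismatches S n p)
    _ ≤ (KPeriod.periodMismatches S n p).card := Finset.card_image_le
    _ ≤ k := hper

/-- If `p` is a `k`-period of a string `S` of length `n`
(0-indexed: at most `k` indices `x ∈ [0, n-p)` with `S x ≠ S (x+p)`),
and `m = ⌊n/p⌋`, then among the consecutive length-`p` blocks
`u_j = S[j*p, (j+1)*p)` for `0 ≤ j < m`, the number of indices
`j ∈ [1, m)` with `u_j ≠ u_{j-1}` is at most `k`. -/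
theorem stmt0 {α : Type*} (n p k : ℕ) (hp : 1 ≤ p) (S : ℕ → α)
    (hper : ((Finset.range (n - p)).filter (fun x => S x ≠ S (x + p))).card ≤ k) :
    ((Finset.Ico 1 (n / p)).filter
      (fun j => ∃ x < p, S (j * p + x) ≠ S ((j - 1) * p + x))).card ≤ k :=
  stmt0_general n p k S hper
end

section
/- Let S ∈ (Σ∪{⊥})^n (with ⊥ treated as an ordinary extra alphabet symbol throughout), let π ≥ 1, and suppose there are at most K indices x ∈ [1, n−π] with S[x] ≠ S[x+π]. Let W be a set of at most k positions in [1,n]. Then the set of characters {S[w − bπ] : w ∈ W, b ≥ 0 an integer, 1 ≤ w − bπ ≤ n} has at most k·(K+1) distinct elements. (Consequently, when all candidate wildcard-periods in a range form an arithmetic progression with common difference π, the number of possible assignments to the wildcard characters across all candidates is at most k·(K+1).) -/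
/-!
Walking down the progression `w, w - π, w - 2π, …` from a position `w`, the character can only
change across a step `x ↦ x + π` with `S x ≠ S (x + π)`, and distinct steps of one progression
give distinct such `x`. So the progression shows at most `K + 1` characters, and the `≤ k`
progressions together at most `k * (K + 1)`.
-/

open Finset
open scoped Classical

theorem card_image_range_succ_le {β : Type*} [DecidableEq β] (f : ℕ → β) (m : ℕ) :
    #((range (m + 1)).image f) ≤ #{b ∈ range m | f b ≠ f (b + 1)} + 1 := by
  have hsub : (range (m + 1)).image f ⊆
      insert (f 0) ({b ∈ range m | f b ≠ f (b + 1)}.image (fun b => f (b + 1))) := by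
    suffices ∀ j ≤ m, f j ∈ insert (f 0) ({b ∈ range m | f b ≠ f (b + 1)}.image
        (fun b => f (b + 1))) by
      simpa [subset_iff, Nat.lt_succ_iff] using this
    intro j hj
    induction j with
    | zero => exact mem_insert_self _ _
    | succ j ih =>
      by_cases hfj : f j = f (j + 1)
      · exact hfj ▸ ih (by omega)
      · refine mem_insert_of_mem (mem_image_of_mem _ ?_)
        simp only [mem_filter, mem_range, ne_eq, hfj, not_false_eq_true, and_true]
        omega
  calc #((range (m + 1)).image f)
      ≤ #({b ∈ range m | f b ≠ f (b + 1)}.image (fun b => f (b + 1))) + 1 :=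
        (card_le_card hsub).trans (card_insert_le _ _)
    _ ≤ #{b ∈ range m | f b ≠ f (b + 1)} + 1 := by gcongr; exact card_image_le

theorem filter_range_mul_le_eq_range {π : ℕ} (hπ : 0 < π) (w : ℕ) :
    {b ∈ range (w + 1) | b * π ≤ w} = range (w / π + 1) := by
  ext b
  simp only [mem_filter, mem_range, Nat.lt_succ_iff, Nat.le_div_iff_mul_le hπ]
  exact ⟨And.right, fun hb => ⟨(Nat.le_mul_of_pos_right b hπ).trans hb, hb⟩⟩

theorem card_filter_ne_sub_mul_le {β : Type*} [DecidableEq β] (S : ℕ → β) {n π w : ℕ}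
    (hπ : 0 < π) (hw : w < n) :
    #{b ∈ range (w / π) | S (w - b * π) ≠ S (w - (b + 1) * π)} ≤
      #{x ∈ range (n - π) | S x ≠ S (x + π)} := by
  have hstep : ∀ b < w / π, (b + 1) * π ≤ w := fun b hb => (Nat.le_div_iff_mul_le hπ).1 hb
  refine card_le_card_of_injOn (fun b => w - (b + 1) * π) (fun b hb => ?_)
    (fun a ha b hb hab => ?_)
  · simp only [coe_filter, Set.mem_ofPred_eq, mem_range] at hb ⊢
    have hle := hstep b hb.1
    have hmul : (b + 1) * π = b * π + π := add_one_mul b π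
    have hshift : w - (b + 1) * π + π = w - b * π := by omega
    exact ⟨by omega, hshift ▸ Ne.symm hb.2⟩
  · simp only [coe_filter, Set.mem_ofPred_eq, mem_range] at ha hb
    have ha' := hstep a ha.1
    have hb' := hstep b hb.1
    have hab' : w - (a + 1) * π = w - (b + 1) * π := hab
    exact Nat.add_right_cancel
      (Nat.eq_of_mul_eq_mul_right hπ (show (a + 1) * π = (b + 1) * π by omega))

theorem card_image_sub_mul_le {β : Type*} [DecidableEq β] (S : ℕ → β) {n π K w : ℕ}
    (hπ : 0 < π) (h : #{x ∈ range (n - π) | S x ≠ S (x + π)} ≤ K) (hw : w < n) :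
    #({b ∈ range (w + 1) | b * π ≤ w}.image fun b => S (w - b * π)) ≤ K + 1 := by
  rw [filter_range_mul_le_eq_range hπ]
  calc _ ≤ #{b ∈ range (w / π) | S (w - b * π) ≠ S (w - (b + 1) * π)} + 1 :=
        card_image_range_succ_le _ _
    _ ≤ K + 1 := by gcongr; exact (card_filter_ne_sub_mul_le S hπ hw).trans h

/-- Let `S ∈ (Σ ∪ {⊥})^n` (wildcard `⊥` encoded as `none`, treated as
an ordinary extra symbol), `π ≥ 1`, and suppose there are at most `K` indices
`x ∈ [0, n-π)` with `S x ≠ S (x+π)`. Let `W` be a set of at most `k` positions in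
`[0, n)`. Then the set of characters `{S (w - bπ) : w ∈ W, b ≥ 0, bπ ≤ w}` has at
most `k * (K + 1)` distinct elements. -/
theorem stmt7 {α : Type*} (n π K k : ℕ) (hπ : 1 ≤ π) (S : ℕ → Option α)
    (h : ((Finset.range (n - π)).filter (fun x => S x ≠ S (x + π))).card ≤ K)
    (W : Finset ℕ) (hWn : ∀ w ∈ W, w < n) (hWk : W.card ≤ k) :
    (W.biUnion (fun w => ((Finset.range (w + 1)).filter (fun b => b * π ≤ w)).image
      (fun b => S (w - b * π)))).card ≤ k * (K + 1) := by
  calc _ ≤ ∑ w ∈ W, #({b ∈ range (w + 1) | b * π ≤ w}.image fun b => S (w - b * π)) :=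
        card_biUnion_le
    _ ≤ ∑ _w ∈ W, (K + 1) := sum_le_sum fun w hw => card_image_sub_mul_le S hπ h (hWn w hw)
    _ = #W * (K + 1) := by rw [sum_const, smul_eq_mul]
    _ ≤ k * (K + 1) := by gcongr
end

section
/- Let T be a string of length N over an alphabet, let 1 ≤ m ≤ N, and let P = T[1,m]. Let i and j be integers with 0 ≤ i < j, j − i < m, and j + m ≤ N. If HAM(P, T[i+1, i+m]) ≤ a and HAM(P, T[j+1, j+m]) ≤ b, then HAM(P[1, m−(j−i)], P[(j−i)+1, m]) ≤ a + b; that is, d = j − i is an (a+b)-period of P. -/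
open scoped Classical

/-- Let `T` be a string of length `N`, `1 ≤ m ≤ N`, and `P = T[0, m)`
its length-`m` prefix. Let `0 ≤ i < j` with `j - i < m` and `j + m ≤ N`. If `P`
occurs at offset `i` with at most `a` mismatches and at offset `j` with at most `b`
mismatches, then `d = j - i` is an `(a+b)`-period of `P`. -/
theorem stmt8 {α : Type*} (N m a b i j : ℕ) (T : ℕ → α)
    (hm1 : 1 ≤ m) (hmN : m ≤ N) (hij : i < j) (hd : j - i < m) (hjm : j + m ≤ N)
    (ha : ((Finset.range m).filter (fun x => T x ≠ T (i + x))).card ≤ a)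
    (hb : ((Finset.range m).filter (fun x => T x ≠ T (j + x))).card ≤ b) :
    ((Finset.range (m - (j - i))).filter
      (fun x => T x ≠ T ((j - i) + x))).card ≤ a + b := by
  set d := j - i with hdd
  set A := (Finset.range m).filter (fun x => T x ≠ T (j + x)) with hA
  set B := (Finset.range m).filter (fun x => T x ≠ T (i + x)) with hB
  have key : ((Finset.range (m - d)).filter (fun x => T x ≠ T (d + x))) ⊆
      A ∪ B.image (fun y => y - d) := by
    intro x hx
    simp only [Finset.mem_filter, Finset.mem_range] at hx
    obtain ⟨hxm, hne⟩ := hx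
    by_cases h1 : T x = T (j + x)
    · refine Finset.mem_union_right _ ?_
      refine Finset.mem_image.mpr ⟨d + x, ?_, by omega⟩
      simp only [hB, Finset.mem_filter, Finset.mem_range]
      refine ⟨by omega, ?_⟩
      have he : i + (d + x) = j + x := by omega
      rw [he]
      intro h
      exact hne (h1.trans h.symm)
    · exact Finset.mem_union_left _ (by
        simp only [hA, Finset.mem_filter, Finset.mem_range]
        exact ⟨by omega, h1⟩)
  calc ((Finset.range (m - d)).filter (fun x => T x ≠ T (d + x))).card
      ≤ (A ∪ B.image (fun y => y - d)).card := Finset.card_le_card key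
    _ ≤ A.card + (B.image (fun y => y - d)).card := Finset.card_union_le _ _
    _ ≤ A.card + B.card := Nat.add_le_add_left Finset.card_image_le _
    _ ≤ a + b := by omega
end

section
/- Let S be a string of length n over an alphabet, let 1 ≤ m ≤ n, let P = S[1,m], and let p be the smallest k-period of P (the smallest d ≥ 1 with HAM(P[1,m−d], P[d+1,m]) ≤ k). If i and j are integers with 0 ≤ i < j, i + m ≤ n, j + m ≤ n, HAM(P, S[i+1, i+m]) ≤ ⌊k/2⌋, and HAM(P, S[j+1, j+m]) ≤ ⌊k/2⌋, then j − i ≥ p; that is, any two starting positions at which P occurs with at most ⌊k/2⌋ mismatches are at least p apart. -/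
open scoped Classical

/-- Let `S` be a string of length `n`, `1 ≤ m ≤ n`, `P = S[0, m)` its
length-`m` prefix, and let `p` be the smallest `k`-period of `P` (the smallest
`d ≥ 1` such that at most `k` indices `x ∈ [0, m-d)` satisfy `P x ≠ P (x+d)`).
If `P` occurs at two offsets `i < j` (with `i + m ≤ n`, `j + m ≤ n`), each with at
most `⌊k/2⌋` mismatches, then `j - i ≥ p`. -/
theorem stmt9 {α : Type*} (n m k p i j : ℕ) (S : ℕ → α)
    (hm1 : 1 ≤ m) (hmn : m ≤ n) (hp1 : 1 ≤ p)
    (hpk : ((Finset.range (m - p)).filter (fun x => S x ≠ S (x + p))).card ≤ k)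
    (hpmin : ∀ d, 1 ≤ d → d < p →
      k < ((Finset.range (m - d)).filter (fun x => S x ≠ S (x + d))).card)
    (hij : i < j) (him : i + m ≤ n) (hjm : j + m ≤ n)
    (hi : ((Finset.range m).filter (fun x => S x ≠ S (i + x))).card ≤ k / 2)
    (hj : ((Finset.range m).filter (fun x => S x ≠ S (j + x))).card ≤ k / 2) :
    p ≤ j - i := by
  by_contra h
  push_neg at h
  set d := j - i with hd
  have hd1 : 1 ≤ d := by omega
  have hk := hpmin d hd1 h
  set A := (Finset.range (m - d)).filter (fun x => S x ≠ S (x + d)) with hA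
  set Bj := (Finset.range m).filter (fun x => S x ≠ S (j + x)) with hB
  set Ci := (Finset.range m).filter (fun x => S x ≠ S (i + x)) with hC
  have hsub : (A \ Bj).image (· + d) ⊆ Ci := by
    intro y hy
    simp only [Finset.mem_image] at hy
    obtain ⟨x, hx, rfl⟩ := hy
    simp only [hA, hB, Finset.mem_sdiff, Finset.mem_filter, Finset.mem_range,
      not_and, not_not] at hx
    obtain ⟨⟨hx1, hx2⟩, hx3⟩ := hx
    have hxm : x < m := by omega
    have hSx : S x = S (j + x) := hx3 hxm
    simp only [hC, Finset.mem_filter, Finset.mem_range]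
    refine ⟨by omega, ?_⟩
    have heq : i + (x + d) = j + x := by omega
    rw [heq, ← hSx]
    exact fun hEq => hx2 hEq.symm
  have h2 : (A \ Bj).card ≤ Ci.card := by
    calc (A \ Bj).card = ((A \ Bj).image (· + d)).card :=
          (Finset.card_image_of_injective _ (add_left_injective d)).symm
      _ ≤ Ci.card := Finset.card_le_card hsub
  have h3 : A.card ≤ Bj.card + (A \ Bj).card := by
    have := Finset.card_inter_add_card_sdiff A Bj
    have hAB : (A ∩ Bj).card ≤ Bj.card := Finset.card_le_card (Finset.inter_subset_right)
    omega
  omega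
end

section
/- Let Σ be a finite nonempty alphabet, let S ∈ (Σ∪{⊥})^n, and let p ≥ 1 divide n. Define δ_p(S) as the minimum, over all strings T ∈ (Σ∪{⊥})^n having wildcard-period p, of the number of positions i with T[i] ≠ S[i]. For each residue r with 1 ≤ r ≤ p, let C_r = {i : 1 ≤ i ≤ n, i ≡ r (mod p)}, let c_r be the number of positions i ∈ C_r with S[i] ≠ ⊥, and let m_r be the maximum over characters σ ∈ Σ of the number of positions i ∈ C_r with S[i] = σ. Then δ_p(S) = Σ_{r=1}^{p} (c_r − m_r); that is, the distance to wildcard-period-p is, summed over residue classes modulo p, the number of non-wildcard entries that are not occurrences of the most frequent non-wildcard character of that class. -/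
open scoped Classical

private lemma Uper {α : Type*} {p n : ℕ} (hp : 1 ≤ p) (U : ℕ → α)
    (hU : ∀ x, x + p < n → U x = U (x + p)) :
    ∀ i, i < n → U (i % p) = U i := by
  intro i
  induction i using Nat.strong_induction_on with
  | _ i ih =>
    intro hi
    rcases lt_or_ge i p with h | h
    · rw [Nat.mod_eq_of_lt h]
    · have h2 : i - p + p = i := Nat.sub_add_cancel h
      have hU' := hU (i - p) (by omega)
      rw [h2] at hU'
      have hm : (i - p) % p = i % p := by
        conv_rhs => rw [← h2, Nat.add_mod_right]
      have := ih (i - p) (by omega) (by omega)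
      rw [hm] at this
      exact this.trans hU'

/-- Let `Σ` be a finite nonempty alphabet, `S ∈ (Σ ∪ {⊥})^n`
(wildcard `⊥` encoded as `none`), and `p ≥ 1` divide `n`. The distance `δ_p(S)` to
wildcard-period-`p` — the minimum over strings `T ∈ (Σ ∪ {⊥})^n` having
wildcard-period `p` of the number of positions where `T` differs from `S` — equals
the sum over residue classes `r` modulo `p` of (number of non-wildcard entries of
`S` in class `r`) minus (maximum over `σ ∈ Σ` of the number of entries of `S` in
class `r` equal to `σ`). -/
theorem stmt12 {σ : Type*} [Fintype σ] [Nonempty σ] (n p : ℕ)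
    (hp : 1 ≤ p) (hdvd : p ∣ n) (S : ℕ → Option σ) :
    sInf {d : ℕ | ∃ T : ℕ → Option σ,
        (∃ U : ℕ → σ, (∀ i < n, ∀ a : σ, T i = some a → U i = a) ∧
          (∀ x, x + p < n → U x = U (x + p))) ∧
        d = ((Finset.range n).filter (fun i => T i ≠ S i)).card} =
      ∑ r ∈ Finset.range p,
        (((Finset.range n).filter (fun i => i % p = r ∧ S i ≠ none)).card -
          Finset.univ.sup (fun a : σ =>
            ((Finset.range n).filter (fun i => i % p = r ∧ S i = some a)).card)) := by
  classical
  have hex : ∀ r : ℕ, ∃ a : σ,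
      Finset.univ.sup (fun a : σ =>
        ((Finset.range n).filter (fun i => i % p = r ∧ S i = some a)).card) =
      ((Finset.range n).filter (fun i => i % p = r ∧ S i = some a)).card := by
    intro r
    obtain ⟨a, _, ha⟩ := Finset.exists_mem_eq_sup (Finset.univ : Finset σ)
      Finset.univ_nonempty (fun a : σ =>
        ((Finset.range n).filter (fun i => i % p = r ∧ S i = some a)).card)
    exact ⟨a, ha⟩
  choose g hg using hex
  -- the witness T
  set T : ℕ → Option σ := fun i => if S i = some (g (i % p)) then S i else none with hT
  have hTmem : (∃ U : ℕ → σ, (∀ i < n, ∀ a : σ, T i = some a → U i = a) ∧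
          (∀ x, x + p < n → U x = U (x + p))) := by
    refine ⟨fun i => g (i % p), ?_, ?_⟩
    · intro i hi a hTa
      simp only [hT] at hTa
      by_cases h : S i = some (g (i % p))
      · rw [if_pos h, h] at hTa
        show g (i % p) = a
        exact Option.some_inj.mp hTa
      · rw [if_neg h] at hTa; exact absurd hTa (by simp)
    · intro x hx
      simp [Nat.add_mod_right]
  have hfiber : ∀ (T : ℕ → Option σ),
      ((Finset.range n).filter (fun i => T i ≠ S i)).card =
      ∑ r ∈ Finset.range p,
        (((Finset.range n).filter (fun i => T i ≠ S i)).filter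
          (fun i => i % p = r)).card := by
    intro T
    exact Finset.card_eq_sum_card_fiberwise (fun i _ => Finset.mem_range.mpr
      (Nat.mod_lt i hp))
  apply le_antisymm
  · apply Nat.sInf_le
    refine ⟨T, hTmem, ?_⟩
    rw [hfiber T]
    apply Finset.sum_congr rfl
    intro r hr
    have hset : ((Finset.range n).filter (fun i => T i ≠ S i)).filter
          (fun i => i % p = r) =
        ((Finset.range n).filter (fun i => i % p = r ∧ S i ≠ none)) \
        ((Finset.range n).filter (fun i => i % p = r ∧ S i = some (g r))) := by
      ext i
      simp only [Finset.mem_filter, Finset.mem_sdiff, Finset.mem_range, hT]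
      constructor
      · rintro ⟨⟨hin, hne⟩, hmod⟩
        by_cases h : S i = some (g (i % p))
        · rw [if_pos h] at hne; exact absurd rfl hne
        · rw [if_neg h] at hne
          rw [hmod] at h
          exact ⟨⟨hin, hmod, fun hn => hne hn.symm⟩, fun h2 => h h2.2.2⟩
      · rintro ⟨⟨hin, hmod, hSn⟩, hnot⟩
        have h : S i ≠ some (g r) := fun h => hnot ⟨hin, hmod, h⟩
        rw [← hmod] at h
        refine ⟨⟨hin, ?_⟩, hmod⟩
        rw [if_neg h]
        exact fun hn => hSn hn.symm
    rw [hset, Finset.card_sdiff_of_subset, hg r]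
    intro i hi
    simp only [Finset.mem_filter, Finset.mem_range] at hi ⊢
    exact ⟨hi.1, hi.2.1, by simp [hi.2.2]⟩
  · apply le_csInf
    · exact ⟨((Finset.range n).filter (fun i => T i ≠ S i)).card, T, hTmem, rfl⟩
    rintro d ⟨T', ⟨U, hTU, hUper⟩, rfl⟩
    rw [hfiber T']
    apply Finset.sum_le_sum
    intro r hr
    set A := (Finset.range n).filter (fun i => i % p = r ∧ S i ≠ none) with hA
    set B := ((Finset.range n).filter (fun i => T' i ≠ S i)).filter
      (fun i => i % p = r) with hB
    have hsub : A \ B ⊆ (Finset.range n).filter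
        (fun i => i % p = r ∧ S i = some (U r)) := by
      intro i hi
      simp only [hA, hB, Finset.mem_sdiff, Finset.mem_filter, Finset.mem_range,
        not_and, not_not] at hi
      obtain ⟨⟨hin, hmod, hSn⟩, hnb⟩ := hi
      have hTS : T' i = S i := by
        by_contra h
        exact absurd (hnb ⟨hin, h⟩) (by simp [hmod])
      obtain ⟨a, ha⟩ := Option.ne_none_iff_exists'.mp hSn
      have hUa : U i = a := hTU i hin a (by rw [hTS, ha])
      have hUr : U (i % p) = U i := Uper hp U hUper i hin
      simp only [Finset.mem_filter, Finset.mem_range]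
      rw [hmod] at hUr
      exact ⟨hin, hmod, by rw [ha, hUr, hUa]⟩
    have h1 : (A \ B).card ≤ Finset.univ.sup (fun a : σ =>
        ((Finset.range n).filter (fun i => i % p = r ∧ S i = some a)).card) := by
      calc (A \ B).card ≤ _ := Finset.card_le_card hsub
        _ ≤ _ := Finset.le_sup (f := fun a : σ =>
          ((Finset.range n).filter (fun i => i % p = r ∧ S i = some a)).card)
          (Finset.mem_univ (U r))
    calc A.card - Finset.univ.sup (fun a : σ =>
        ((Finset.range n).filter (fun i => i % p = r ∧ S i = some a)).card)
        ≤ A.card - (A \ B).card := Nat.sub_le_sub_left h1 _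
      _ = (A \ (A \ B)).card := (Finset.card_sdiff_of_subset (Finset.sdiff_subset)).symm
      _ = (A ∩ B).card := by
          congr 1
          ext i
          simp only [Finset.mem_sdiff, Finset.mem_inter]
          tauto
      _ ≤ B.card := Finset.card_le_card (Finset.inter_subset_right)
end
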